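/- arXiv:math/0303286 — 2 statements merged into one kernel-verified Lean document; each statement's English description precedes it below -/
import Mathlib

section
/- Let E be a 3-dimensional F₂-vector space and let (M₁, M₂), (M₁', M₂') be two ordered pairs of distinct order-7 subgroups of GL(E). Then the set {h ∈ GL(E) : h M₁ h⁻¹ = M₁' and h M₂ h⁻¹ = M₂'} has exactly 3 elements. -/
/-!
`GL(E) ≅ GL₃(𝔽₂)` has order 168, so its subgroups of order 7 are its Sylow 7-subgroups, of which
there are 8 as soon as there are two. A Sylow 7-subgroup `P` fixes no other Sylow 7-subgroup, so
its orbits on the remaining seven have size 7 and `P` permutes them transitively: `GL(E)` acts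
2-transitively on its Sylow 7-subgroups. The elements sending `(M₁, M₂)` to `(M₁', M₂')` then
form a coset of the stabilizer of `(M₁, M₂)`, whose order is `168 / (8 · 7) = 3`.
-/

open MulAction

theorem Set.ncard_offDiag_univ {α : Type*} [Finite α] :
    (Set.univ : Set α).offDiag.ncard = Nat.card α * (Nat.card α - 1) := by
  classical
  have := Fintype.ofFinite α
  rw [Set.ncard_eq_toFinset_card', Set.toFinset_offDiag, Set.toFinset_univ, Finset.offDiag_card,
    Finset.card_univ, Nat.card_eq_fintype_card, Nat.mul_sub_one]

namespace MulAction

variable {G α : Type*} [Group G] [MulAction G α]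

theorem ncard_setOf_smul_eq {x y : α} (hy : y ∈ orbit G x) :
    {g : G | g • x = y}.ncard = Nat.card (stabilizer G x) := by
  obtain ⟨g₀, rfl⟩ := hy
  have hcoset : {g : G | g • x = g₀ • x} = (g₀ * ·) '' (stabilizer G x : Set G) := by
    ext g
    simp only [Set.mem_ofPred_eq, Set.mem_image, SetLike.mem_coe, mem_stabilizer_iff]
    refine ⟨fun h ↦ ⟨g₀⁻¹ * g, by rw [mul_smul, h, inv_smul_smul], mul_inv_cancel_left g₀ g⟩, ?_⟩
    rintro ⟨s, hs, rfl⟩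
    rw [mul_smul, hs]
  rw [hcoset, Set.ncard_image_of_injective _ (mul_right_injective g₀), ← Nat.card_coe_set_eq,
    SetLike.coe_sort_coe]

theorem orbit_prod_eq_offDiag [IsMultiplyPretransitive G α 2] {a b : α} (hab : a ≠ b) :
    orbit G (a, b) = (Set.univ : Set α).offDiag := by
  ext ⟨c, d⟩
  simp only [Set.mem_offDiag, Set.mem_univ, true_and]
  constructor
  · rintro ⟨g, hg⟩
    simp only [Prod.smul_mk, Prod.mk.injEq] at hg
    rw [← hg.1, ← hg.2]
    exact fun h ↦ hab (smul_left_cancel g h)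
  · intro hcd
    obtain ⟨g, hc, hd⟩ := is_two_pretransitive_iff.mp ‹_› hab hcd
    exact ⟨g, by simp only [Prod.smul_mk, hc, hd]⟩

theorem card_stabilizer_prod_mul [Finite α] [IsMultiplyPretransitive G α 2] {a b : α}
    (hab : a ≠ b) :
    Nat.card (stabilizer G (a, b)) * (Nat.card α * (Nat.card α - 1)) = Nat.card G := by
  rw [← Set.ncard_offDiag_univ, ← orbit_prod_eq_offDiag (G := G) hab, ← index_stabilizer,
    Subgroup.card_mul_index]

end MulAction

theorem Sylow.coe_smul_eq_map_conj {p : ℕ} {G : Type*} [Group G] (g : G) (P : Sylow p G) :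
    ((g • P : Sylow p G) : Subgroup G) = (P : Subgroup G).map (MulAut.conj g).toMonoidHom :=
  rfl

namespace Sylow

variable {p : ℕ} [Fact p.Prime] {G : Type*} [Group G] [Finite G]

theorem orbit_eq_compl_singleton_of_card_eq_succ (h : Nat.card (Sylow p G) = p + 1)
    {P Q : Sylow p G} (hQP : Q ≠ P) : orbit (P : Subgroup G) Q = {P}ᶜ := by
  have hsub : orbit (P : Subgroup G) Q ⊆ {P}ᶜ := by
    rintro _ ⟨k, rfl⟩ hk
    replace hk : (k : G) • Q = P := hk
    apply hQP
    calc Q = (k : G)⁻¹ • P := eq_inv_smul_iff.mpr hk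
      _ = P := smul_eq_iff_mem_normalizer.mpr (Subgroup.le_normalizer (inv_mem k.2))
  have hcompl : ({P}ᶜ : Set (Sylow p G)).ncard = p := by
    have := Set.ncard_add_ncard_compl {P}
    rw [Set.ncard_singleton, h] at this
    omega
  obtain ⟨n, hn⟩ := P.isPGroup'.card_orbit Q
  have hn0 : n ≠ 0 := by
    rintro rfl
    have hfixed : Q ∈ fixedPoints (P : Subgroup G) (Sylow p G) := by
      rw [← subsingleton_orbit_iff_mem_fixedPoints, ← Set.subsingleton_coe]
      exact (Nat.card_eq_one_iff_unique.mp hn).1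
    have hPQ : (P : Subgroup G) ≤ Q := P.isPGroup'.sylow_mem_fixedPoints_iff.mp hfixed
    exact hQP (Sylow.ext (P.is_maximal' Q.isPGroup' hPQ))
  refine Set.eq_of_subset_of_ncard_le hsub ?_
  rw [hcompl, ← Nat.card_coe_set_eq, hn]
  exact Nat.le_self_pow hn0 p

theorem isMultiplyPretransitive_two_of_card_eq_succ (h : Nat.card (Sylow p G) = p + 1) :
    IsMultiplyPretransitive G (Sylow p G) 2 := by
  refine is_two_pretransitive_iff.mpr fun {P Q P' Q'} hPQ hPQ' ↦ ?_
  obtain ⟨g, rfl⟩ := exists_smul_eq G P P'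
  have hQ' : Q' ∈ orbit ((g • P : Sylow p G) : Subgroup G) (g • Q) := by
    rw [orbit_eq_compl_singleton_of_card_eq_succ h fun e ↦ hPQ (smul_left_cancel g e).symm]
    exact hPQ'.symm
  obtain ⟨k, hk⟩ := hQ'
  refine ⟨k * g, ?_, ?_⟩
  · rw [mul_smul]
    exact smul_eq_iff_mem_normalizer.mpr (Subgroup.le_normalizer k.2)
  · rwa [mul_smul]

end Sylow

theorem card_linearEquiv_self {K V : Type*} [Field K] [Fintype K] [AddCommGroup V]
    [Module K V] [Module.Finite K V] :
    Nat.card (V ≃ₗ[K] V) = ∏ i : Fin (Module.finrank K V),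
      (Fintype.card K ^ Module.finrank K V - Fintype.card K ^ (i : ℕ)) := by
  rw [← Matrix.card_GL_field, Nat.card_congr
    ((Matrix.GeneralLinearGroup.toLin' (Module.finBasis K V)).trans
      (LinearMap.GeneralLinearGroup.generalLinearEquiv K V)).toEquiv.symm]

instance : Fact (Nat.Prime 7) := ⟨by norm_num⟩

section OrderOneHundredSixtyEight

variable {G : Type*} [Group G]

theorem Subgroup.index_eq_24_of_card_eq_7 (hG : Nat.card G = 168) {H : Subgroup G}
    (hH : Nat.card H = 7) : H.index = 24 := by
  have := H.card_mul_index
  rw [hG, hH] at this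
  omega

theorem exists_sylow_seven_coe_eq (hG : Nat.card G = 168) {H : Subgroup G}
    (hH : Nat.card H = 7) : ∃ P : Sylow 7 G, (P : Subgroup G) = H :=
  ⟨(IsPGroup.of_card (hH.trans (pow_one 7).symm)).toSylow
    (by rw [Subgroup.index_eq_24_of_card_eq_7 hG hH]; norm_num), rfl⟩

theorem card_sylow_seven_eq_eight [Finite G] {P Q : Sylow 7 G}
    (hP : (P : Subgroup G).index = 24) (hPQ : P ≠ Q) : Nat.card (Sylow 7 G) = 8 := by
  have hdvd : Nat.card (Sylow 7 G) ∣ 24 := hP ▸ P.card_dvd_index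
  have hmod : Nat.card (Sylow 7 G) % 7 = 1 := card_sylow_modEq_one 7 G
  have hne : Nat.card (Sylow 7 G) ≠ 1 := fun h ↦
    hPQ ((Nat.card_eq_one_iff_unique.mp h).1.elim P Q)
  have hle := Nat.le_of_dvd (by norm_num) hdvd
  interval_cases Nat.card (Sylow 7 G) <;> omega

theorem ncard_setOf_map_conj_eq_eq_three (hG : Nat.card G = 168)
    {M₁ M₂ M₁' M₂' : Subgroup G} (h₁ : Nat.card M₁ = 7) (h₂ : Nat.card M₂ = 7)
    (h₁' : Nat.card M₁' = 7) (h₂' : Nat.card M₂' = 7) (hne : M₁ ≠ M₂) (hne' : M₁' ≠ M₂') :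
    {h : G | M₁.map (MulAut.conj h).toMonoidHom = M₁' ∧
      M₂.map (MulAut.conj h).toMonoidHom = M₂'}.ncard = 3 := by
  have : Finite G := Nat.finite_of_card_ne_zero (by rw [hG]; norm_num)
  obtain ⟨P₁, rfl⟩ := exists_sylow_seven_coe_eq hG h₁
  obtain ⟨P₂, rfl⟩ := exists_sylow_seven_coe_eq hG h₂
  obtain ⟨P₁', rfl⟩ := exists_sylow_seven_coe_eq hG h₁'
  obtain ⟨P₂', rfl⟩ := exists_sylow_seven_coe_eq hG h₂'
  have hP : P₁ ≠ P₂ := fun h ↦ hne (h ▸ rfl)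
  have hP' : P₁' ≠ P₂' := fun h ↦ hne' (h ▸ rfl)
  have h8 := card_sylow_seven_eq_eight (Subgroup.index_eq_24_of_card_eq_7 hG h₁) hP
  have := Sylow.isMultiplyPretransitive_two_of_card_eq_succ h8
  have hset : {h : G | (P₁ : Subgroup G).map (MulAut.conj h).toMonoidHom = P₁' ∧
      (P₂ : Subgroup G).map (MulAut.conj h).toMonoidHom = P₂'} =
      {g : G | g • (P₁, P₂) = (P₁', P₂')} := by
    ext g
    simp only [← Sylow.coe_smul_eq_map_conj, Set.mem_ofPred_eq, Prod.smul_mk, Prod.mk.injEq,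
      ← Sylow.ext_iff]
  have hstab := card_stabilizer_prod_mul (G := G) hP
  rw [h8, hG] at hstab
  rw [hset, ncard_setOf_smul_eq (by rw [orbit_prod_eq_offDiag hP]; exact ⟨trivial, trivial, hP'⟩)]
  omega

end OrderOneHundredSixtyEight

/-- Given two ordered pairs `(M₁, M₂)` and `(M₁', M₂')` of distinct order-7
subgroups of `GL(E)` (with `E` 3-dimensional over `F₂`), there are exactly 3
elements `h` with `h M₁ h⁻¹ = M₁'` and `h M₂ h⁻¹ = M₂'`. -/
theorem stmt_15 (E : Type*) [AddCommGroup E] [Module (ZMod 2) E]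
    (hdim : Module.finrank (ZMod 2) E = 3)
    (M₁ M₂ M₁' M₂' : Subgroup (E ≃ₗ[ZMod 2] E))
    (h₁ : Nat.card M₁ = 7) (h₂ : Nat.card M₂ = 7)
    (h₁' : Nat.card M₁' = 7) (h₂' : Nat.card M₂' = 7)
    (hne : M₁ ≠ M₂) (hne' : M₁' ≠ M₂') :
    {h : E ≃ₗ[ZMod 2] E |
      M₁.map (MulAut.conj h).toMonoidHom = M₁' ∧
      M₂.map (MulAut.conj h).toMonoidHom = M₂'}.ncard = 3 := by
  have : Module.Finite (ZMod 2) E := Module.finite_of_finrank_eq_succ hdim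
  have hcard : Nat.card (E ≃ₗ[ZMod 2] E) = 168 := by
    rw [card_linearEquiv_self, hdim, ZMod.card, Fin.prod_univ_three]
    rfl
  exact ncard_setOf_map_conj_eq_eq_three hcard h₁ h₂ h₁' h₂' hne hne'
end

section
/- Let E be a 3-dimensional F₂-vector space, ℱ its set of order-7 subgroups equipped with the affine structure vec(M₁,M₂) = fixed vector of N(M₁) ∩ N(M₂). Then for every h ∈ GL(E), the conjugation map M ↦ hMh⁻¹ on ℱ is an affine bijection whose associated linear map is h, i.e., vec(hM₁h⁻¹, hM₂h⁻¹) = h(vec(M₁,M₂)) for all M₁, M₂ ∈ ℱ. -/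
/-!
Both `vec (h M₁ h⁻¹) (h M₂ h⁻¹)` and `h (vec M₁ M₂)` are nonzero vectors fixed by
`N(h M₁ h⁻¹) ⊓ N(h M₂ h⁻¹) = h (N(M₁) ⊓ N(M₂)) h⁻¹`. In `GL(E) ≅ GL₃(𝔽₂)`, of order 168,
two distinct Sylow 7-subgroups have normalizers of order 21 meeting in a group of order 3.
An element of order 3 cannot fix two distinct nonzero vectors: it would fix a plane pointwise,
hence be a transvection or the identity, hence an involution.
-/

open Module Submodule Subgroup

section ZModTwo

variable {E : Type*} [AddCommGroup E] [Module (ZMod 2) E]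

lemma add_self_eq_zero_of_zmod_two (z : E) : z + z = 0 := by
  rw [← two_smul (ZMod 2), show (2 : ZMod 2) = 0 from rfl, zero_smul]

lemma eq_of_ne_zero_of_finrank_eq_one (hE : finrank (ZMod 2) E = 1) {x y : E}
    (hx : x ≠ 0) (hy : y ≠ 0) : x = y := by
  obtain ⟨c, rfl⟩ := (finrank_eq_one_iff_of_nonzero' x hx).mp hE y
  rcases (by decide : ∀ c : ZMod 2, c = 0 ∨ c = 1) c with rfl | rfl
  · exact absurd (zero_smul _ x) hy
  · exact (one_smul _ x).symm

lemma LinearEquiv.sq_eq_one_of_eqOn_hyperplane (V : Submodule (ZMod 2) E)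
    (hV : finrank (ZMod 2) (E ⧸ V) = 1) (g : E ≃ₗ[ZMod 2] E) (hg : ∀ z ∈ V, g z = z) :
    g ^ 2 = 1 := by
  have hsub : ∀ x, g x - x ∈ V := by
    intro x
    by_cases hx : x ∈ V
    · simp [hg x hx]
    have hgx : g x ∉ V := fun hgx ↦ hx (g.injective (hg _ hgx) ▸ hgx)
    exact (Submodule.Quotient.eq V).mp <| eq_of_ne_zero_of_finrank_eq_one hV
      (mt (Quotient.mk_eq_zero V).mp hgx) (mt (Quotient.mk_eq_zero V).mp hx)
  ext x
  have hz : g (g x) = (g x - x) + g x := by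
    rw [← sub_eq_iff_eq_add, ← map_sub, hg _ (hsub x)]
  calc (g ^ 2) x = g (g x) := rfl
    _ = x + ((g x - x) + (g x - x)) := by rw [hz]; abel
    _ = x := by rw [add_self_eq_zero_of_zmod_two, add_zero]

lemma LinearEquiv.eq_of_apply_eq_self_of_orderOf_eq_three
    (hdim : finrank (ZMod 2) E = 3) {g : E ≃ₗ[ZMod 2] E}
    (hg : orderOf g = 3) {v w : E} (hv : g v = v) (hw : g w = w) (hv0 : v ≠ 0) (hw0 : w ≠ 0) :
    v = w := by
  by_contra hvw
  have : FiniteDimensional (ZMod 2) E := .of_finrank_eq_succ hdim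
  have hli : LinearIndependent (ZMod 2) ![v, w] := by
    refine (LinearIndependent.pair_iff' hv0).mpr fun a ↦ ?_
    rcases (by decide : ∀ c : ZMod 2, c = 0 ∨ c = 1) a with rfl | rfl
    · simpa using hw0.symm
    · simpa using hvw
  set V := span (ZMod 2) (Set.range ![v, w])
  have hV : finrank (ZMod 2) (E ⧸ V) = 1 := by
    have := V.finrank_quotient_add_finrank
    rw [finrank_span_eq_card hli, Fintype.card_fin] at this
    omega
  have hfix : ∀ z ∈ V, g z = z := fun z hz ↦
    LinearMap.eqOn_span (f := g.toLinearMap) (g := LinearMap.id)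
      (by rintro _ ⟨i, rfl⟩; fin_cases i <;> simp [hv, hw]) hz
  have := orderOf_dvd_of_pow_eq_one (g.sq_eq_one_of_eqOn_hyperplane V hV hfix)
  rw [hg] at this
  norm_num at this

end ZModTwo

lemma card_linearEquiv_self_of_finrank_eq_three {E : Type*} [AddCommGroup E] [Module (ZMod 2) E]
    (hdim : finrank (ZMod 2) E = 3) : Nat.card (E ≃ₗ[ZMod 2] E) = 168 := by
  have : FiniteDimensional (ZMod 2) E := .of_finrank_eq_succ hdim
  let b := finBasisOfFinrankEq (ZMod 2) E hdim
  let e : (E ≃ₗ[ZMod 2] E) ≃* GL (Fin 3) (ZMod 2) :=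
    (LinearMap.GeneralLinearGroup.generalLinearEquiv (ZMod 2) E).symm.trans
      (Units.mapEquiv (LinearMap.toMatrixAlgEquiv b).toMulEquiv)
  rw [Nat.card_congr e.toEquiv, Matrix.card_GL_field]
  simp [Fin.prod_univ_three, ZMod.card]

lemma LinearEquiv.apply_eq_self_of_mem_map_conj {R M : Type*} [Semiring R] [AddCommMonoid M]
    [Module R M] {H : Subgroup (M ≃ₗ[R] M)} {v : M} (hv : ∀ k ∈ H, k v = v) (h : M ≃ₗ[R] M)
    {g : M ≃ₗ[R] M} (hg : g ∈ H.map (MulAut.conj h).toMonoidHom) : g (h v) = h v := by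
  obtain ⟨k, hk, rfl⟩ := hg
  simp [MulAut.conj_apply, LinearEquiv.mul_apply, hv k hk]

section Sylow

variable {G : Type*} [Group G] [Finite G]

lemma Sylow.not_dvd_card_normalizer_inf {p : ℕ} [Fact p.Prime] {P Q : Sylow p G}
    (hP : Nat.card P = p) (hQ : Nat.card Q = p) (hPQ : P ≠ Q) :
    ¬ p ∣ Nat.card (normalizer (P : Set G) ⊓ normalizer (Q : Set G) :) := by
  intro hdvd
  obtain ⟨x, hx⟩ := exists_prime_orderOf_dvd_card' p hdvd
  have hxp : orderOf (x : G) = p := (orderOf_coe x).trans hx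
  have hcard : Nat.card (zpowers (x : G)) = p := by rw [Nat.card_zpowers, hxp]
  have hK : IsPGroup p (zpowers (x : G)) := .of_card (n := 1) (by rw [hcard, pow_one])
  -- a `p`-subgroup normalizing a Sylow `p`-subgroup lies in it
  have key : ∀ R : Sylow p G, Nat.card R = p → (x : G) ∈ normalizer (R : Set G) →
      zpowers (x : G) = R := fun R hR hxR ↦ by
    have hle := hK.inf_normalizer_sylow R
    rw [inf_eq_left.mpr (zpowers_le.mpr hxR)] at hle
    exact eq_of_le_of_card_ge (hle ▸ inf_le_right) (by rw [hR, hcard])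
  exact hPQ (Sylow.ext ((key P hP x.2.1).symm.trans (key Q hQ x.2.2)))

lemma card_sylow_seven_eq_eight_s17 [Fact (Nat.Prime 7)] [Nontrivial (Sylow 7 G)]
    (hG : Nat.card G = 168) (P : Sylow 7 G) (hP : Nat.card P = 7) :
    Nat.card (Sylow 7 G) = 8 := by
  have hidx : (P : Subgroup G).index = 24 := by
    have := (P : Subgroup G).card_mul_index
    rw [hP, hG] at this
    omega
  have hdvd : Nat.card (Sylow 7 G) ∣ 24 := hidx ▸ P.card_dvd_index
  have hmod : Nat.card (Sylow 7 G) % 7 = 1 := card_sylow_modEq_one 7 G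
  have hgt : 1 < Nat.card (Sylow 7 G) := Finite.one_lt_card
  have := Nat.le_of_dvd (by norm_num) hdvd
  interval_cases Nat.card (Sylow 7 G) <;> omega

lemma exists_orderOf_eq_three_mem_normalizer_inf (hG : Nat.card G = 168) {A B : Subgroup G}
    (hA : Nat.card A = 7) (hB : Nat.card B = 7) (hAB : A ≠ B) :
    ∃ g ∈ normalizer (A : Set G) ⊓ normalizer (B : Set G), orderOf g = 3 := by
  have : Fact (Nat.Prime 7) := ⟨by norm_num⟩
  have : Fact (Nat.Prime 3) := ⟨by norm_num⟩
  have toSylow : ∀ H : Subgroup G, Nat.card H = 7 → ∃ P : Sylow 7 G, (P : Subgroup G) = H := by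
    intro H hH
    have hidx : H.index = 24 := by
      have := H.card_mul_index
      rw [hH, hG] at this
      omega
    exact ⟨(IsPGroup.of_card (n := 1) (by rw [hH, pow_one])).toSylow (by rw [hidx]; norm_num),
      IsPGroup.toSylow_coe _ _⟩
  obtain ⟨P, rfl⟩ := toSylow A hA
  obtain ⟨Q, rfl⟩ := toSylow B hB
  have hPQ : P ≠ Q := fun h ↦ hAB (h ▸ rfl)
  have : Nontrivial (Sylow 7 G) := ⟨P, Q, hPQ⟩
  have hN : ∀ R : Sylow 7 G, (normalizer (R : Set G)).index = 8 := fun R ↦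
    R.card_eq_index_normalizer.symm.trans (card_sylow_seven_eq_eight_s17 hG P hA)
  have hNP : Nat.card (normalizer (P : Set G)) = 21 := by
    have := (normalizer (P : Set G)).card_mul_index
    rw [hN, hG] at this
    omega
  set D := normalizer (P : Set G) ⊓ normalizer (Q : Set G)
  have hD21 : Nat.card D ∣ 21 := hNP ▸ card_dvd_of_le inf_le_left
  have hD7 : ¬ 7 ∣ Nat.card D := Sylow.not_dvd_card_normalizer_inf hA hB hPQ
  have hDidx : D.index ≤ 64 := index_inf_le.trans (by rw [hN, hN])
  have hD3 : Nat.card D = 3 := by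
    have := D.card_mul_index
    rw [hG] at this
    have := Nat.le_of_dvd (by norm_num) hD21
    interval_cases Nat.card D <;> omega
  obtain ⟨x, hx⟩ := exists_prime_orderOf_dvd_card' (G := D) 3 (hD3 ▸ dvd_rfl)
  exact ⟨x, x.2, (orderOf_coe x).trans hx⟩

end Sylow

/-- With the affine structure on the set of order-7 subgroups of `GL(E)` given
by `vec M₁ M₂` = the fixed vector of `N(M₁) ⊓ N(M₂)`, conjugation by any
`h ∈ GL(E)` is an affine map with linear part `h`:
`vec (h M₁ h⁻¹) (h M₂ h⁻¹) = h (vec M₁ M₂)`. -/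
theorem stmt_17 (E : Type*) [AddCommGroup E] [Module (ZMod 2) E]
    (hdim : Module.finrank (ZMod 2) E = 3)
    (vec : Subgroup (E ≃ₗ[ZMod 2] E) → Subgroup (E ≃ₗ[ZMod 2] E) → E)
    (hdiag : ∀ M, vec M M = 0)
    (hvec : ∀ M₁ M₂ : Subgroup (E ≃ₗ[ZMod 2] E),
      Nat.card M₁ = 7 → Nat.card M₂ = 7 → M₁ ≠ M₂ →
      vec M₁ M₂ ≠ 0 ∧
      ∀ g ∈ Subgroup.normalizer (M₁ : Set (E ≃ₗ[ZMod 2] E)) ⊓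
        Subgroup.normalizer (M₂ : Set (E ≃ₗ[ZMod 2] E)), g (vec M₁ M₂) = vec M₁ M₂)
    (h : E ≃ₗ[ZMod 2] E)
    (M₁ M₂ : Subgroup (E ≃ₗ[ZMod 2] E))
    (h₁ : Nat.card M₁ = 7) (h₂ : Nat.card M₂ = 7) :
    vec (M₁.map (MulAut.conj h).toMonoidHom) (M₂.map (MulAut.conj h).toMonoidHom)
      = h (vec M₁ M₂) := by
  rcases eq_or_ne M₁ M₂ with rfl | hne
  · rw [hdiag, hdiag, map_zero]
  have hcard := card_linearEquiv_self_of_finrank_eq_three hdim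
  have : Finite (E ≃ₗ[ZMod 2] E) := Nat.finite_of_card_ne_zero (by rw [hcard]; norm_num)
  have hφ : Function.Injective (MulAut.conj h).toMonoidHom := (MulAut.conj h).injective
  obtain ⟨hv₀, hv⟩ := hvec _ _ (by rwa [card_map_of_injective hφ])
    (by rwa [card_map_of_injective hφ]) ((map_injective hφ).ne hne)
  obtain ⟨hw₀, hw⟩ := hvec M₁ M₂ h₁ h₂ hne
  obtain ⟨g, hgN, hg⟩ := exists_orderOf_eq_three_mem_normalizer_inf hcard
    (by rwa [card_map_of_injective hφ]) (by rwa [card_map_of_injective hφ])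
    ((map_injective hφ).ne hne)
  have hgN' : g ∈ (normalizer (M₁ : Set (E ≃ₗ[ZMod 2] E)) ⊓ normalizer M₂).map
      (MulAut.conj h).toMonoidHom := by
    rwa [map_inf _ _ _ hφ, map_equiv_normalizer_eq, map_equiv_normalizer_eq]
  exact LinearEquiv.eq_of_apply_eq_self_of_orderOf_eq_three hdim hg (hv g hgN)
    (LinearEquiv.apply_eq_self_of_mem_map_conj hw h hgN') hv₀ (h.map_ne_zero_iff.mpr hw₀)
end
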